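/- arXiv:2602.04574 — 4 statements merged into one kernel-verified Lean document; each statement's English description precedes it below -/
import Mathlib

section
/- Let φ_1,…,φ_n ≥ 0 with Σ_{k=1}^n φ_k = 1 and max_{k} φ_k ≤ K for some K > 0. Let I_1,…,I_m be i.i.d. indices distributed uniformly on {1,…,n}, and set Φ = Σ_{j=1}^m φ_{I_j}. Then E[Φ] = m/n, and P(Φ ≤ m/(2n)) ≤ P(|Φ − m/n| ≥ m/(2n)) ≤ 2 exp(−(3/40) · m/(nK)). -/
/-!
Each summand `φ (I j)` takes values in `[0, K]` and has mean `1 / n`. Since `exp` lies below its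
chord on `[0, t K]`, `E e^{tY} ≤ 1 + (e^{tK} - 1) / K · E Y ≤ exp ((e^{tK} - 1) / K · E Y)` for such
a summand `Y`, so by independence `E e^{tΦ} ≤ exp ((e^{tK} - 1) / K · m / n)`. Chernoff's bound at
`t = 1 / (2K)` and at `t = -1 / K` then controls the tails `Φ ≥ 3m / (2n)` and `Φ ≤ m / (2n)`
by `exp (c · m / (nK))` with `c = e^{1/2} - 7/4` and `c = e^{-1} - 1/2`, both below `-3/40`.
-/

open MeasureTheory ProbabilityTheory Real
open scoped ENNReal

lemma exp_mul_le_one_add_of_mem_Icc {t y K : ℝ} (hK : 0 < K) (hy : y ∈ Set.Icc 0 K) :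
    exp (t * y) ≤ 1 + (exp (t * K) - 1) / K * y := by
  have hθ0 : 0 ≤ y / K := div_nonneg hy.1 hK.le
  have hθ1 : y / K ≤ 1 := (div_le_one hK).mpr hy.2
  have h := convexOn_exp.2 (Set.mem_univ 0) (Set.mem_univ (t * K)) (sub_nonneg.mpr hθ1) hθ0
    (sub_add_cancel 1 _)
  have harg : (1 - y / K) • (0 : ℝ) + (y / K) • (t * K) = t * y := by
    simp only [smul_eq_mul]; field_simp; ring
  rw [harg] at h
  calc exp (t * y) ≤ (1 - y / K) • exp 0 + (y / K) • exp (t * K) := h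
    _ = 1 + (exp (t * K) - 1) / K * y := by simp only [smul_eq_mul, exp_zero]; ring

section
variable {Ω : Type*} [MeasurableSpace Ω] {μ : Measure Ω}

lemma integral_comp_of_uniform [IsFiniteMeasure μ] {n : ℕ} {X : Ω → Fin n} (hX : Measurable X)
    (hunif : ∀ k, μ {ω | X ω = k} = (n : ℝ≥0∞)⁻¹) (f : Fin n → ℝ) :
    ∫ ω, f (X ω) ∂μ = (n : ℝ)⁻¹ * ∑ k, f k := by
  rw [← integral_map hX.aemeasurable (measurable_of_finite f).aestronglyMeasurable,
    integral_fintype .of_finite, Finset.mul_sum]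
  refine Finset.sum_congr rfl fun k _ ↦ ?_
  rw [measureReal_def, Measure.map_apply hX (measurableSet_singleton k)]
  simp [Set.preimage, hunif]

variable [IsProbabilityMeasure μ]

lemma mgf_le_exp_mul_integral_of_mem_Icc {Y : Ω → ℝ} {K : ℝ} (hK : 0 < K)
    (hY : AEMeasurable Y μ) (hYK : ∀ᵐ ω ∂μ, Y ω ∈ Set.Icc 0 K) (t : ℝ) :
    mgf Y μ t ≤ exp ((exp (t * K) - 1) / K * μ[Y]) := by
  calc mgf Y μ t ≤ ∫ ω, (1 + (exp (t * K) - 1) / K * Y ω) ∂μ := by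
        refine integral_mono_ae (integrable_exp_mul_of_mem_Icc hY hYK) ?_ ?_
        · exact (integrable_const 1).add ((Integrable.of_mem_Icc 0 K hY hYK).const_mul _)
        · filter_upwards [hYK] with ω hω using exp_mul_le_one_add_of_mem_Icc hK hω
    _ = 1 + (exp (t * K) - 1) / K * μ[Y] := by
        rw [integral_add (integrable_const 1) ((Integrable.of_mem_Icc 0 K hY hYK).const_mul _),
          integral_const_mul]
        simp
    _ ≤ _ := (add_comm _ _).trans_le (add_one_le_exp _)

lemma mgf_sum_le_exp_mul_integral_of_mem_Icc {ι : Type*} {Y : ι → Ω → ℝ} {K : ℝ} (hK : 0 < K)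
    (hindep : iIndepFun Y μ) (hY : ∀ i, AEMeasurable (Y i) μ)
    (hYK : ∀ i, ∀ᵐ ω ∂μ, Y i ω ∈ Set.Icc 0 K) (s : Finset ι) (t : ℝ) :
    mgf (fun ω ↦ ∑ i ∈ s, Y i ω) μ t ≤ exp ((exp (t * K) - 1) / K * ∫ ω, ∑ i ∈ s, Y i ω ∂μ) := by
  rw [integral_finsetSum _ fun i _ ↦ Integrable.of_mem_Icc 0 K (hY i) (hYK i), ← Finset.sum_fn,
    hindep.mgf_sum₀ hY, Finset.mul_sum, exp_sum]
  exact Finset.prod_le_prod (fun i _ ↦ mgf_nonneg)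
    fun i _ ↦ mgf_le_exp_mul_integral_of_mem_Icc hK (hY i) (hYK i) t

variable {S : Ω → ℝ} {K M : ℝ}

lemma measureReal_ge_three_halves_mul_le_of_mgf_le (hK : 0 < K) (hM : 0 ≤ M)
    (hint : ∀ t, Integrable (fun ω ↦ exp (t * S ω)) μ)
    (hmgf : ∀ t, mgf S μ t ≤ exp ((exp (t * K) - 1) / K * M)) :
    μ.real {ω | 3 / 2 * M ≤ S ω} ≤ exp (-(3 / 40) * M / K) := by
  have hexp : exp (1 / 2 : ℝ) < 67 / 40 := by
    have h : exp (1 / 2 : ℝ) ^ 2 = exp 1 := by rw [← exp_nat_mul]; norm_num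
    nlinarith [exp_one_lt_d9, exp_pos (1 / 2 : ℝ)]
  have hMK : 0 ≤ M / K := by positivity
  calc μ.real {ω | 3 / 2 * M ≤ S ω}
      ≤ exp (-(1 / (2 * K)) * (3 / 2 * M)) * mgf S μ (1 / (2 * K)) :=
        measure_ge_le_exp_mul_mgf _ (by positivity) (hint _)
    _ ≤ exp (-(1 / (2 * K)) * (3 / 2 * M)) * exp ((exp (1 / 2) - 1) / K * M) := by
        gcongr
        have hK2 : 1 / (2 * K) * K = 1 / 2 := by field_simp
        simpa only [hK2] using hmgf (1 / (2 * K))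
    _ = exp ((exp (1 / 2) - 7 / 4) * (M / K)) := by
        rw [← exp_add]; congr 1; field_simp; ring
    _ ≤ exp (-(3 / 40) * M / K) := by
        rw [exp_le_exp, mul_div_assoc]; nlinarith

lemma measureReal_le_half_le_of_mgf_le (hK : 0 < K) (hM : 0 ≤ M)
    (hint : ∀ t, Integrable (fun ω ↦ exp (t * S ω)) μ)
    (hmgf : ∀ t, mgf S μ t ≤ exp ((exp (t * K) - 1) / K * M)) :
    μ.real {ω | S ω ≤ M / 2} ≤ exp (-(3 / 40) * M / K) := by
  have hMK : 0 ≤ M / K := by positivity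
  calc μ.real {ω | S ω ≤ M / 2}
      ≤ exp (-(-1 / K) * (M / 2)) * mgf S μ (-1 / K) :=
        measure_le_le_exp_mul_mgf _ (div_nonpos_of_nonpos_of_nonneg (by norm_num) hK.le) (hint _)
    _ ≤ exp (-(-1 / K) * (M / 2)) * exp ((exp (-1) - 1) / K * M) := by
        gcongr
        have hK1 : -1 / K * K = -1 := by field_simp
        simpa only [hK1] using hmgf (-1 / K)
    _ = exp ((exp (-1) - 1 / 2) * (M / K)) := by
        rw [← exp_add]; congr 1; field_simp; ring
    _ ≤ exp (-(3 / 40) * M / K) := by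
        rw [exp_le_exp, mul_div_assoc]; nlinarith [exp_neg_one_lt_d9]

lemma measure_abs_sub_ge_half_le_of_mgf_le (hK : 0 < K) (hM : 0 ≤ M)
    (hint : ∀ t, Integrable (fun ω ↦ exp (t * S ω)) μ)
    (hmgf : ∀ t, mgf S μ t ≤ exp ((exp (t * K) - 1) / K * M)) :
    μ {ω | M / 2 ≤ |S ω - M|} ≤ ENNReal.ofReal (2 * exp (-(3 / 40) * M / K)) := by
  have hsplit : {ω | M / 2 ≤ |S ω - M|} ⊆ {ω | 3 / 2 * M ≤ S ω} ∪ {ω | S ω ≤ M / 2} := by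
    intro ω (hω : M / 2 ≤ |S ω - M|)
    rcases le_abs'.mp hω with h | h
    · exact Or.inr (show S ω ≤ M / 2 by linarith)
    · exact Or.inl (show 3 / 2 * M ≤ S ω by linarith)
  rw [← ofReal_measureReal]
  refine ENNReal.ofReal_le_ofReal ?_
  calc μ.real {ω | M / 2 ≤ |S ω - M|}
      ≤ μ.real {ω | 3 / 2 * M ≤ S ω} + μ.real {ω | S ω ≤ M / 2} :=
        (measureReal_mono hsplit).trans (measureReal_union_le _ _)
    _ ≤ 2 * exp (-(3 / 40) * M / K) := by
        linarith [measureReal_ge_three_halves_mul_le_of_mgf_le hK hM hint hmgf,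
          measureReal_le_half_le_of_mgf_le hK hM hint hmgf]

end

theorem pls_concentration_of_cumulative_score_general
    {Ω : Type*} [MeasureSpace Ω] [IsProbabilityMeasure (ℙ : Measure Ω)]
    (n m : ℕ)
    (φ : Fin n → ℝ) (hφ0 : ∀ k, 0 ≤ φ k) (hφsum : ∑ k, φ k = 1)
    (K : ℝ) (hK : 0 < K) (hφK : ∀ k, φ k ≤ K)
    (I : Fin m → Ω → Fin n)
    (hmeas : ∀ j, Measurable (I j))
    (hindep : iIndepFun I ℙ)
    (hunif : ∀ j, ∀ k : Fin n, ℙ {ω | I j ω = k} = (n : ENNReal)⁻¹) :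
    (∫ ω, (∑ j, φ (I j ω)) ∂ℙ) = (m : ℝ) / n ∧
    ℙ {ω | (∑ j, φ (I j ω)) ≤ (m : ℝ) / (2 * n)}
      ≤ ℙ {ω | |(∑ j, φ (I j ω)) - (m : ℝ) / n| ≥ (m : ℝ) / (2 * n)} ∧
    ℙ {ω | |(∑ j, φ (I j ω)) - (m : ℝ) / n| ≥ (m : ℝ) / (2 * n)}
      ≤ ENNReal.ofReal (2 * Real.exp (-(3 / 40) * m / (n * K))) := by
  have hY : ∀ j, Measurable fun ω ↦ φ (I j ω) := fun j ↦ (measurable_of_finite φ).comp (hmeas j)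
  have hYK : ∀ j, ∀ᵐ ω ∂ℙ, φ (I j ω) ∈ Set.Icc 0 K :=
    fun j ↦ ae_of_all _ fun ω ↦ ⟨hφ0 _, hφK _⟩
  have hmean : ∫ ω, ∑ j, φ (I j ω) ∂ℙ = m / n := by
    rw [integral_finsetSum _ fun j _ ↦ Integrable.of_mem_Icc 0 K (hY j).aemeasurable (hYK j)]
    simp [integral_comp_of_uniform (hmeas _) (hunif _), hφsum, div_eq_mul_inv]
  have hint (t : ℝ) : Integrable (fun ω ↦ exp (t * ∑ j, φ (I j ω))) ℙ :=
    integrable_exp_mul_of_mem_Icc (b := m * K)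
      (Finset.measurable_sum _ fun j _ ↦ hY j).aemeasurable
      (ae_of_all _ fun ω ↦ ⟨Finset.sum_nonneg fun j _ ↦ hφ0 _,
        by simpa using Finset.sum_le_card_nsmul Finset.univ _ K fun j _ ↦ hφK (I j ω)⟩)
  have hmgf (t : ℝ) :
      mgf (fun ω ↦ ∑ j, φ (I j ω)) ℙ t ≤ exp ((exp (t * K) - 1) / K * (m / n)) := by
    rw [← hmean]
    exact mgf_sum_le_exp_mul_integral_of_mem_Icc hK (hindep.comp _ fun _ ↦ measurable_of_finite φ)
      (fun j ↦ (hY j).aemeasurable) hYK Finset.univ t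
  have hhalf : (m : ℝ) / (2 * n) = m / n / 2 := by ring
  refine ⟨hmean, measure_mono (Set.ofPred_subset_ofPred.mpr fun ω hω ↦ ?_), ?_⟩
  · calc (m : ℝ) / (2 * n) ≤ m / n - ∑ j, φ (I j ω) := by linarith
      _ ≤ |∑ j, φ (I j ω) - m / n| := abs_sub_comm (_ : ℝ) _ ▸ le_abs_self _
  · rw [hhalf, show -(3 / 40) * (m : ℝ) / (n * K) = -(3 / 40) * (m / n) / K by ring]
    exact measure_abs_sub_ge_half_le_of_mgf_le hK (by positivity) hint hmgf

/-- **Lemma 2 (Concentration of the cumulative propagation score Φ_q).**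
Let `φ_1, …, φ_n ≥ 0` with `∑ φ_k = 1` and `max_k φ_k ≤ K`.  Let `I_1, …, I_m` be
i.i.d. indices uniformly distributed on `{1, …, n}` and `Φ = ∑_j φ_{I_j}`.  Then
`E[Φ] = m/n`, and
`P(Φ ≤ m/(2n)) ≤ P(|Φ − m/n| ≥ m/(2n)) ≤ 2 exp(−(3/40)·m/(nK))`. -/
theorem pls_concentration_of_cumulative_score
    {Ω : Type*} [MeasureSpace Ω] [IsProbabilityMeasure (ℙ : Measure Ω)]
    (n m : ℕ) (hn : 0 < n)
    (φ : Fin n → ℝ) (hφ0 : ∀ k, 0 ≤ φ k) (hφsum : ∑ k, φ k = 1)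
    (K : ℝ) (hK : 0 < K) (hφK : ∀ k, φ k ≤ K)
    (I : Fin m → Ω → Fin n)
    (hmeas : ∀ j, Measurable (I j))
    (hindep : iIndepFun I ℙ)
    (hunif : ∀ j, ∀ k : Fin n, ℙ {ω | I j ω = k} = (n : ENNReal)⁻¹) :
    (∫ ω, (∑ j, φ (I j ω)) ∂ℙ) = (m : ℝ) / n ∧
    ℙ {ω | (∑ j, φ (I j ω)) ≤ (m : ℝ) / (2 * n)}
      ≤ ℙ {ω | |(∑ j, φ (I j ω)) - (m : ℝ) / n| ≥ (m : ℝ) / (2 * n)} ∧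
    ℙ {ω | |(∑ j, φ (I j ω)) - (m : ℝ) / n| ≥ (m : ℝ) / (2 * n)}
      ≤ ENNReal.ofReal (2 * Real.exp (-(3 / 40) * m / (n * K))) :=
  pls_concentration_of_cumulative_score_general n m φ hφ0 hφsum K hK hφK I hmeas hindep hunif
end

section
/- Let S be an n×n right-stochastic matrix (nonnegative entries, row sums 1), α ∈ (0,1), q ∈ {1,…,n}, l ∈ ℕ, and J ⊂ {1,…,n} a set of indices such that (S^i)_{q,j} = 0 for every j ∈ J and every i with 0 ≤ i < l (i.e., no walk of length less than l in the graph connects q to any j ∈ J). Then Σ_{j∈J} (1−α) ((I − αS)^{-1})_{q,j} ≤ α^l. -/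
/-!
In the `ℓ∞` operator norm a row-stochastic `S` has `‖S‖ ≤ 1`, so `(1 - αS)⁻¹ = ∑ αⁱ Sⁱ`.
The `J`-weight of row `q` is therefore `∑ αⁱ wᵢ` with `wᵢ = ∑_{j ∈ J} (Sⁱ)_{qj} ≤ 1`, because
`Sⁱ` is again stochastic. Since `wᵢ = 0` for `i < l`, this is at most `∑_{i ≥ l} αⁱ = αˡ / (1 - α)`.
-/

open Matrix Finset

namespace Matrix

variable {n : Type*} [Fintype n] [DecidableEq n] {S : Matrix n n ℝ}

lemma sum_apply_le_one_of_mem_rowStochastic {R : Type*} [Semiring R] [PartialOrder R]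
    [IsOrderedRing R] {M : Matrix n n R} (hM : M ∈ rowStochastic R n) (q : n) (J : Finset n) :
    ∑ j ∈ J, M q j ≤ 1 :=
  calc ∑ j ∈ J, M q j ≤ ∑ j, M q j :=
        sum_le_sum_of_subset_of_nonneg (subset_univ J) fun _ _ _ => hM.1 q _
    _ = 1 := sum_row_of_mem_rowStochastic hM q

section LinftyOp

attribute [local instance] Matrix.linftyOpNormedRing Matrix.linftyOpNormedAlgebra

lemma linfty_opNorm_le_one_of_mem_rowStochastic (hS : S ∈ rowStochastic ℝ n) : ‖S‖ ≤ 1 := by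
  rw [linfty_opNorm_def, NNReal.coe_le_one]
  refine Finset.sup_le fun i _ => ?_
  rw [← NNReal.coe_le_coe, NNReal.coe_sum, NNReal.coe_one]
  simp_rw [coe_nnnorm, Real.norm_of_nonneg (hS.1 i _)]
  exact (sum_row_of_mem_rowStochastic hS i).le

lemma hasSum_pow_mul_apply_inv_one_sub_smul (hS : S ∈ rowStochastic ℝ n) {α : ℝ}
    (hα0 : 0 ≤ α) (hα1 : α < 1) (a b : n) :
    HasSum (fun i : ℕ => α ^ i * (S ^ i) a b) ((1 - α • S)⁻¹ a b) := by
  have hnorm : ‖α • S‖ < 1 := by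
    rw [norm_smul, Real.norm_of_nonneg hα0]
    exact (mul_le_of_le_one_right hα0 (linfty_opNorm_le_one_of_mem_rowStochastic hS)).trans_lt hα1
  have hgeom := hasSum_geom_series_inverse _ hnorm
  rw [← nonsing_inv_eq_ringInverse] at hgeom
  simpa only [smul_pow, smul_apply, smul_eq_mul] using Pi.hasSum.mp (Pi.hasSum.mp hgeom a) b

end LinftyOp

end Matrix

lemma mul_le_pow_of_hasSum_pow_mul {α s : ℝ} {w : ℕ → ℝ} {l : ℕ} (hα0 : 0 ≤ α) (hα1 : α < 1)
    (hs : HasSum (fun i => α ^ i * w i) s) (hw : ∀ i, w i ≤ 1) (hwl : ∀ i < l, w i = 0) :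
    (1 - α) * s ≤ α ^ l := by
  have hhead : ∑ i ∈ range l, α ^ i * w i = 0 :=
    sum_eq_zero fun i hi => by rw [hwl i (mem_range.mp hi), mul_zero]
  have htail : HasSum (fun i => α ^ (i + l) * w (i + l)) s := by
    simpa only [hhead, sub_zero] using (hasSum_nat_add_iff' l).mpr hs
  have hgeom : HasSum (fun i => α ^ l * α ^ i) (α ^ l * (1 - α)⁻¹) :=
    (hasSum_geometric_of_lt_one hα0 hα1).mul_left _
  have hle : s ≤ α ^ l * (1 - α)⁻¹ := hasSum_le (fun i => by
    rw [pow_add, mul_comm (α ^ i)]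
    exact mul_le_of_le_one_right (by positivity) (hw _)) htail hgeom
  have hα : 0 < 1 - α := sub_pos.mpr hα1
  calc (1 - α) * s ≤ (1 - α) * (α ^ l * (1 - α)⁻¹) := mul_le_mul_of_nonneg_left hle hα.le
    _ = α ^ l := by field_simp

/-- **Path-length bound on heat-kernel weights.**  Let `S` be an `n×n`
right-stochastic matrix, `α ∈ (0,1)`, `q` a row index, `l ∈ ℕ`, and `J` a set of
column indices such that `(S^i)_{q,j} = 0` for every `j ∈ J` and every `i < l`
(no walk of length `< l` connects `q` to `J`).  Then the total normalized
heat-kernel weight that `q` receives from `J` satisfies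
`∑_{j ∈ J} (1−α)·((I − αS)⁻¹)_{q,j} ≤ α^l`. -/
theorem pls_weight_outside_via_path_length
    (n : ℕ) (S : Matrix (Fin n) (Fin n) ℝ)
    (hnonneg : ∀ i j, 0 ≤ S i j)
    (hrow : ∀ i, ∑ j, S i j = 1)
    (α : ℝ) (hα0 : 0 < α) (hα1 : α < 1)
    (q : Fin n) (l : ℕ) (J : Finset (Fin n))
    (hJ : ∀ j ∈ J, ∀ i < l, (S ^ i) q j = 0) :
    ∑ j ∈ J, (1 - α) * (1 - α • S)⁻¹ q j ≤ α ^ l := by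
  have hS : S ∈ rowStochastic ℝ (Fin n) := mem_rowStochastic_iff_sum.mpr ⟨hnonneg, hrow⟩
  have hsum : HasSum (fun i => α ^ i * ∑ j ∈ J, (S ^ i) q j) (∑ j ∈ J, (1 - α • S)⁻¹ q j) := by
    simpa only [mul_sum] using
      hasSum_sum fun j _ => hasSum_pow_mul_apply_inv_one_sub_smul hS hα0.le hα1 q j
  rw [← mul_sum]
  exact mul_le_pow_of_hasSum_pow_mul hα0.le hα1 hsum
    (fun i => sum_apply_le_one_of_mem_rowStochastic (pow_mem hS i) q J)
    (fun i hi => sum_eq_zero fun j hj => hJ j hj i hi)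
end

section
/- Let W be a symmetric n×n matrix with entries in {0,1} and zero diagonal whose degrees N_j = Σ_k W_{jk} are all positive; let D = diag(N_1,…,N_n), S = D^{-1}W, and assume the spectral (operator 2-)norm of S is at most 1. Then for every i ≥ 1 and every j, ‖S^i e_j‖_2 ≤ √(N_j) / min_k N_k ≤ √(max_k N_k) / min_k N_k, and consequently for every α ∈ (0,1) and all indices q, j, the normalized heat-kernel weight satisfies (1−α) Σ_{i=0}^∞ α^i (S^i)_{q,j} ≤ (1−α)·1_{{q=j}} + α · √(max_k N_k) / min_k N_k. -/
open Matrix Finset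

/-! Since `S` is a contraction, `‖S^(i+1) e_j‖ ≤ ‖S e_j‖`, and the column
`S e_j = (W a j / N a)_a` has squared norm at most `∑_a W a j / (min N)^2 = N j / (min N)^2`,
the column sums of the symmetric `W` being the degrees. Hence every entry of `S^i`, `i ≥ 1`,
is at most `√(max N) / min N`; as the entries are nonnegative, summing them against the
geometric weights `α^i` gives the bound, the term `i = 0` contributing the identity. -/

section

variable {ι : Type*} [Fintype ι]

theorem apply_le_sqrt_sum_sq (v : ι → ℝ) (q : ι) : v q ≤ √(∑ a, v a ^ 2) :=
  (le_abs_self _).trans <| Real.abs_le_sqrt <|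
    single_le_sum (f := fun a => v a ^ 2) (fun _ _ => sq_nonneg _) (mem_univ q)

theorem sqrt_sum_sq_pow_mulVec_le [DecidableEq ι] {S : Matrix ι ι ℝ}
    (hS : ∀ v : ι → ℝ, √(∑ a, (S *ᵥ v) a ^ 2) ≤ √(∑ a, v a ^ 2))
    (i : ℕ) (v : ι → ℝ) :
    √(∑ a, ((S ^ i) *ᵥ v) a ^ 2) ≤ √(∑ a, v a ^ 2) := by
  induction i generalizing v with
  | zero => simp
  | succ i ih => rw [pow_succ, ← mulVec_mulVec]; exact (ih _).trans (hS v)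

theorem sqrt_sum_sq_col_le {W S : Matrix ι ι ℝ} (hsymm : W.IsSymm)
    (hW0 : ∀ a b, 0 ≤ W a b) (hW1 : ∀ a b, W a b ≤ 1)
    {N : ι → ℝ} (hN : ∀ j, N j = ∑ k, W j k) (hS : ∀ a b, S a b = W a b / N a)
    {m : ℝ} (hm : 0 < m) (hmN : ∀ a, m ≤ N a) (j : ι) :
    √(∑ a, S a j ^ 2) ≤ √(N j) / m := by
  have hterm : ∀ a, S a j ^ 2 ≤ W a j / m ^ 2 := fun a => by
    rw [hS, div_pow]
    have hWsq : W a j ^ 2 ≤ W a j := by nlinarith [hW0 a j, hW1 a j]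
    calc W a j ^ 2 / N a ^ 2 ≤ W a j / N a ^ 2 := by gcongr
      _ ≤ W a j / m ^ 2 := by gcongr; exacts [hW0 a j, hmN a]
  have hcolsum : ∑ a, W a j = N j := by
    rw [hN]; exact sum_congr rfl fun a _ => (hsymm.apply a j).symm
  calc √(∑ a, S a j ^ 2) ≤ √(N j / m ^ 2) := by
        gcongr
        exact (sum_le_sum fun a _ => hterm a).trans_eq (by rw [← sum_div, hcolsum])
    _ = √(N j) / m := by rw [Real.sqrt_div' _ (sq_nonneg m), Real.sqrt_sq hm.le]

theorem one_sub_mul_tsum_pow_mul_le {α C : ℝ} {f : ℕ → ℝ} (hα0 : 0 ≤ α) (hα1 : α < 1)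
    (hf0 : ∀ i, 0 ≤ f i) (hfC : ∀ i, f (i + 1) ≤ C) :
    (1 - α) * ∑' i, α ^ i * f i ≤ (1 - α) * f 0 + α * C := by
  have hgeom := summable_geometric_of_lt_one hα0 hα1
  have hsum : Summable fun i => α ^ i * f i := by
    refine .of_nonneg_of_le (fun i => mul_nonneg (pow_nonneg hα0 i) (hf0 i))
      (fun i => mul_le_mul_of_nonneg_left ?_ (pow_nonneg hα0 i)) (hgeom.mul_right (max (f 0) C))
    cases i with
    | zero => exact le_max_left _ _
    | succ i => exact (hfC i).trans (le_max_right _ _)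
  have htail : ∑' i, α ^ (i + 1) * f (i + 1) ≤ α * C / (1 - α) :=
    calc ∑' i, α ^ (i + 1) * f (i + 1) ≤ ∑' i, α * C * α ^ i :=
          Summable.tsum_le_tsum
            (fun i => (mul_le_mul_of_nonneg_left (hfC i) (pow_nonneg hα0 _)).trans_eq (by ring))
            ((summable_nat_add_iff 1).2 hsum) (hgeom.mul_left _)
      _ = α * C / (1 - α) := by
          rw [tsum_mul_left, tsum_geometric_of_lt_one hα0 hα1, div_eq_mul_inv]
  have h1α : 0 < 1 - α := by linarith
  rw [hsum.tsum_eq_zero_add, pow_zero, one_mul, mul_add]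
  linear_combination (le_div_iff₀' h1α).1 htail

end

theorem pls_heat_kernel_weight_bound_general
    (n : ℕ)
    (W : Matrix (Fin n) (Fin n) ℝ)
    (hsymm : W.IsSymm)
    (h01 : ∀ a b, W a b = 0 ∨ W a b = 1)
    (N : Fin n → ℝ) (hN : ∀ j, N j = ∑ k, W j k)
    (hNpos : ∀ j, 0 < N j)
    (S : Matrix (Fin n) (Fin n) ℝ) (hS : ∀ a b, S a b = W a b / N a)
    (hspec : ∀ v : Fin n → ℝ,
      Real.sqrt (∑ a, (S.mulVec v a) ^ 2) ≤ Real.sqrt (∑ a, (v a) ^ 2)) :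
    (∀ i : ℕ, 1 ≤ i → ∀ j : Fin n,
        Real.sqrt (∑ a, (((S ^ i).mulVec (Pi.single j 1)) a) ^ 2)
            ≤ Real.sqrt (N j) / (⨅ k, N k) ∧
        Real.sqrt (N j) / (⨅ k, N k)
            ≤ Real.sqrt (⨆ k, N k) / (⨅ k, N k)) ∧
    (∀ α : ℝ, 0 < α → α < 1 → ∀ q j : Fin n,
        (1 - α) * ∑' i : ℕ, α ^ i * (S ^ i) q j
          ≤ (1 - α) * (if q = j then 1 else 0)
              + α * Real.sqrt (⨆ k, N k) / (⨅ k, N k)) := by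
  rcases isEmpty_or_nonempty (Fin n) with _ | _
  · exact ⟨fun _ _ j => isEmptyElim j, fun _ _ _ q => isEmptyElim q⟩
  obtain ⟨k₀, hk₀⟩ := exists_eq_ciInf_of_finite (f := N)
  have hm : 0 < ⨅ k, N k := hk₀ ▸ hNpos k₀
  have hmN : ∀ a, (⨅ k, N k) ≤ N a := ciInf_le (Finite.bddBelow_range N)
  have hW0 : ∀ a b, 0 ≤ W a b := fun a b => by rcases h01 a b with h | h <;> simp [h]
  have hW1 : ∀ a b, W a b ≤ 1 := fun a b => by rcases h01 a b with h | h <;> simp [h]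
  have hnorm : ∀ i : ℕ, 1 ≤ i → ∀ j : Fin n,
      √(∑ a, ((S ^ i) *ᵥ Pi.single j 1) a ^ 2) ≤ √(N j) / (⨅ k, N k) ∧
        √(N j) / (⨅ k, N k) ≤ √(⨆ k, N k) / (⨅ k, N k) := by
    intro i hi j
    obtain ⟨i, rfl⟩ := Nat.exists_eq_add_of_le' hi
    refine ⟨?_, by gcongr; exact le_ciSup (Finite.bddAbove_range N) j⟩
    rw [pow_succ, ← mulVec_mulVec]
    refine (sqrt_sum_sq_pow_mulVec_le hspec i _).trans ?_
    simpa [mulVec_single_one] using sqrt_sum_sq_col_le hsymm hW0 hW1 hN hS hm hmN j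
  refine ⟨hnorm, fun α hα0 hα1 q j => ?_⟩
  have hentry : ∀ i, (S ^ (i + 1)) q j ≤ √(⨆ k, N k) / (⨅ k, N k) := fun i => by
    obtain ⟨hcol, hmono⟩ := hnorm (i + 1) (Nat.le_add_left 1 i) j
    simpa [mulVec_single_one] using (apply_le_sqrt_sum_sq _ q).trans (hcol.trans hmono)
  have hSnn : ∀ a b, 0 ≤ S a b := fun a b => hS a b ▸ div_nonneg (hW0 a b) (hNpos a).le
  simpa [one_apply, mul_div_assoc] using one_sub_mul_tsum_pow_mul_le hα0.le hα1
    (pow_apply_nonneg hSnn · q j) hentry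

/-- **Step 5.2: bounding the heat-kernel weights via the degrees.**  Let `W` be the
symmetric `{0,1}` adjacency matrix of a graph without self-loops, with positive
degrees `N_j = ∑_k W_{jk}`, let `S = D⁻¹W` be the row-normalized transition matrix,
and assume the spectral norm of `S` is at most `1` (i.e. `‖S v‖₂ ≤ ‖v‖₂` for all
`v`).  Then `‖S^i e_j‖₂ ≤ √(N_j)/min_k N_k ≤ √(max_k N_k)/min_k N_k` for all
`i ≥ 1` and `j`, and consequently for every `α ∈ (0,1)` and all `q, j`,
`(1−α) ∑_{i=0}^∞ α^i (S^i)_{q,j} ≤ (1−α)·1_{q=j} + α·√(max_k N_k)/min_k N_k`. -/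
theorem pls_heat_kernel_weight_bound
    (n : ℕ) [NeZero n]
    (W : Matrix (Fin n) (Fin n) ℝ)
    (hsymm : W.IsSymm)
    (h01 : ∀ a b, W a b = 0 ∨ W a b = 1)
    (hdiag : ∀ a, W a a = 0)
    (N : Fin n → ℝ) (hN : ∀ j, N j = ∑ k, W j k)
    (hNpos : ∀ j, 0 < N j)
    (S : Matrix (Fin n) (Fin n) ℝ) (hS : ∀ a b, S a b = W a b / N a)
    (hspec : ∀ v : Fin n → ℝ,
      Real.sqrt (∑ a, (S.mulVec v a) ^ 2) ≤ Real.sqrt (∑ a, (v a) ^ 2)) :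
    (∀ i : ℕ, 1 ≤ i → ∀ j : Fin n,
        Real.sqrt (∑ a, (((S ^ i).mulVec (Pi.single j 1)) a) ^ 2)
            ≤ Real.sqrt (N j) / (⨅ k, N k) ∧
        Real.sqrt (N j) / (⨅ k, N k)
            ≤ Real.sqrt (⨆ k, N k) / (⨅ k, N k)) ∧
    (∀ α : ℝ, 0 < α → α < 1 → ∀ q j : Fin n,
        (1 - α) * ∑' i : ℕ, α ^ i * (S ^ i) q j
          ≤ (1 - α) * (if q = j then 1 else 0)
              + α * Real.sqrt (⨆ k, N k) / (⨅ k, N k)) :=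
  pls_heat_kernel_weight_bound_general n W hsymm h01 N hN hNpos S hS hspec
end

section
/- Let p : ℝ^d → Δ_C be L-Lipschitz with respect to the Euclidean norms, let x_q ∈ ℝ^d and x_1,…,x_m ∈ ℝ^d, let φ_1,…,φ_m > 0 be weights with Φ = Σ_{j=1}^m φ_j, fix a class c ∈ {1,…,C}, and let Y_1,…,Y_m be independent random variables with Y_j^c ∈ {0,1} and E[Y_j^c] = p(x_j)^c. Define p̂^c = Σ_{j=1}^m (φ_j/Φ) Y_j^c and the bias bound B = Σ_{j=1}^m (φ_j/Φ) · min{1, L‖x_j − x_q‖_2}. Then for every ε > 0, P(|p̂^c − p(x_q)^c| > ε + B) ≤ 2 exp(−2ε^2 / Σ_{j=1}^m (φ_j/Φ)^2). -/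
/-!
By the triangle inequality the error splits into a bias `|E p̂ - p(x_q)^c|` and a deviation
`|p̂ - E p̂|`. The bias is a `φ/Φ`-weighted average of `|p(x_j)^c - p(x_q)^c|`, each at most `1`
(both lie in `[0, 1]`) and at most `L‖x_j - x_q‖` (a coordinate is dominated by the Euclidean
norm). The summands `(φ_j/Φ) Y_j^c` are independent and take values in `[0, φ_j/Φ]`, so by
Hoeffding's lemma their centred sum is sub-Gaussian with variance proxy `∑_j (φ_j/Φ)^2 / 4`,
and the Chernoff bound applied to it and to its negative gives the two-sided tail.
-/

open MeasureTheory ProbabilityTheory Real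

namespace ProbabilityTheory.HasSubgaussianMGF

variable {Ω : Type*} {mΩ : MeasurableSpace Ω} {μ : Measure Ω}

lemma measureReal_abs_ge_le {X : Ω → ℝ} {c : NNReal} (h : HasSubgaussianMGF X c μ) {ε : ℝ}
    (hε : 0 ≤ ε) :
    μ.real {ω | ε ≤ |X ω|} ≤ 2 * exp (-ε ^ 2 / (2 * c)) := by
  have hsplit : {ω | ε ≤ |X ω|} ⊆ {ω | ε ≤ X ω} ∪ {ω | ε ≤ (-X) ω} :=
    fun ω (hω : ε ≤ |X ω|) => (le_abs.mp hω : ε ≤ X ω ∨ ε ≤ -X ω)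
  have : IsFiniteMeasure μ := by simpa [integrable_const_iff] using h.integrable_exp_mul 0
  calc μ.real {ω | ε ≤ |X ω|}
      ≤ μ.real {ω | ε ≤ X ω} + μ.real {ω | ε ≤ (-X) ω} :=
        (measureReal_mono hsplit).trans (measureReal_union_le _ _)
    _ ≤ exp (-ε ^ 2 / (2 * c)) + exp (-ε ^ 2 / (2 * c)) :=
        add_le_add (h.measure_ge_le hε) (h.neg.measure_ge_le hε)
    _ = 2 * exp (-ε ^ 2 / (2 * c)) := by ring

end ProbabilityTheory.HasSubgaussianMGF

/-- **Hoeffding's inequality**. -/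
theorem ProbabilityTheory.measureReal_abs_sum_sub_sum_integral_ge_le {Ω ι : Type*} {mΩ : MeasurableSpace Ω}
    {μ : Measure Ω} {X : ι → Ω → ℝ} (hX : ∀ i, Measurable (X i)) (hindep : iIndepFun X μ)
    {s : Finset ι} {a b : ι → ℝ} (hab : ∀ i ∈ s, ∀ᵐ ω ∂μ, X i ω ∈ Set.Icc (a i) (b i))
    {ε : ℝ} (hε : 0 ≤ ε) :
    μ.real {ω | ε ≤ |∑ i ∈ s, X i ω - ∑ i ∈ s, μ[X i]|}
      ≤ 2 * exp (-2 * ε ^ 2 / ∑ i ∈ s, (b i - a i) ^ 2) := by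
  have := hindep.isProbabilityMeasure
  have hcentered := hindep.comp (fun i x => x - μ[X i]) fun _ => measurable_id.sub_const _
  have hsum := (HasSubgaussianMGF.sum_of_iIndepFun hcentered (s := s) fun i hi =>
    hasSubgaussianMGF_of_mem_Icc (hX i).aemeasurable (hab i hi)).measureReal_abs_ge_le hε
  simp only [Function.comp_apply, Finset.sum_sub_distrib] at hsum
  convert hsum using 3
  push_cast
  simp only [Real.norm_eq_abs, div_pow, sq_abs, ← Finset.sum_div]
  ring

lemma abs_sum_mul_sub_le {ι : Type*} (s : Finset ι) {w : ι → ℝ} (hw : ∀ i ∈ s, 0 ≤ w i)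
    (hw1 : ∑ i ∈ s, w i = 1) (q : ι → ℝ) (r : ℝ) :
    |∑ i ∈ s, w i * q i - r| ≤ ∑ i ∈ s, w i * |q i - r| := by
  calc |∑ i ∈ s, w i * q i - r| = |∑ i ∈ s, w i * (q i - r)| := by
        simp only [mul_sub, Finset.sum_sub_distrib, ← Finset.sum_mul, hw1, one_mul]
    _ ≤ ∑ i ∈ s, |w i * (q i - r)| := Finset.abs_sum_le_sum_abs _ _
    _ = ∑ i ∈ s, w i * |q i - r| := Finset.sum_congr rfl fun i hi => by
        rw [abs_mul, abs_of_nonneg (hw i hi)]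

lemma LipschitzWith.abs_apply_sub_le_min_of_mem_stdSimplex {α ι : Type*} [PseudoMetricSpace α]
    [Fintype ι] {q : ENNReal} [Fact (1 ≤ q)] {K : NNReal} {f : α → PiLp q (fun _ : ι => ℝ)}
    (hf : LipschitzWith K f) (hsimplex : ∀ x, (f x).ofLp ∈ stdSimplex ℝ ι) (a b : α) (i : ι) :
    |f a i - f b i| ≤ min 1 (K * dist a b) := by
  refine le_min ?_ ?_
  · have ha := mem_Icc_of_mem_stdSimplex (hsimplex a) i
    have hb := mem_Icc_of_mem_stdSimplex (hsimplex b) i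
    exact abs_sub_le_iff.mpr ⟨by linarith [ha.2, hb.1], by linarith [ha.1, hb.2]⟩
  · calc |f a i - f b i| = dist (f a i) (f b i) := (Real.dist_eq _ _).symm
      _ ≤ dist (f a) (f b) := PiLp.dist_apply_le _ _ i
      _ ≤ K * dist a b := hf.dist_le_mul a b

/-- **Single-class confidence interval for the PLS estimate.**  Let
`p : ℝ^d → Δ_C` be `L`-Lipschitz, let `φ_1, …, φ_m > 0` with `Φ = ∑ φ_j`, fix a
class `c`, and let `Y_1, …, Y_m` be independent with `Y_j^c ∈ {0,1}` and
`E[Y_j^c] = p(x_j)^c`.  With `p̂^c = ∑_j (φ_j/Φ)·Y_j^c` and bias bound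
`B = ∑_j (φ_j/Φ)·min{1, L‖x_j − x_q‖}`, for every `ε > 0`,
`P(|p̂^c − p(x_q)^c| > ε + B) ≤ 2 exp(−2ε²/∑_j (φ_j/Φ)²)`. -/
theorem pls_single_class_confidence_interval
    {Ω : Type*} [MeasureSpace Ω] [IsProbabilityMeasure (ℙ : Measure Ω)]
    (d C m : ℕ)
    (p : EuclideanSpace ℝ (Fin d) → EuclideanSpace ℝ (Fin C))
    (hsimplex : ∀ x, (∀ c, 0 ≤ p x c) ∧ ∑ c, p x c = 1)
    (L : NNReal) (hLip : LipschitzWith L p)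
    (xq : EuclideanSpace ℝ (Fin d)) (x : Fin m → EuclideanSpace ℝ (Fin d))
    (φ : Fin m → ℝ) (hφ : ∀ j, 0 < φ j)
    (c : Fin C)
    (Y : Fin m → Ω → ℝ)
    (hmeas : ∀ j, Measurable (Y j))
    (hindep : iIndepFun Y ℙ)
    (h01 : ∀ j ω, Y j ω = 0 ∨ Y j ω = 1)
    (hmean : ∀ j, (∫ ω, Y j ω ∂ℙ) = p (x j) c) :
    ∀ ε : ℝ, 0 < ε →
      ℙ {ω | |(∑ j, (φ j / ∑ i, φ i) * Y j ω) - p xq c|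
              > ε + ∑ j, (φ j / ∑ i, φ i) * min 1 ((L : ℝ) * ‖x j - xq‖)}
        ≤ ENNReal.ofReal (2 * Real.exp (-2 * ε ^ 2 / ∑ j, (φ j / ∑ i, φ i) ^ 2)) := by
  intro ε hε
  rcases isEmpty_or_nonempty (Fin m) with _ | _
  -- with no samples the bound is `2 * exp (-2 * ε ^ 2 / 0) = 2`
  · exact prob_le_one.trans (by simp)
  set w : Fin m → ℝ := fun j => φ j / ∑ i, φ i
  have hΦ : 0 < ∑ i, φ i := Finset.sum_pos (fun i _ => hφ i) Finset.univ_nonempty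
  have hw : ∀ j, 0 ≤ w j := fun j => (div_pos (hφ j) hΦ).le
  have hw1 : ∑ j, w j = 1 := by rw [← Finset.sum_div, div_self hΦ.ne']
  have hbias : |∑ j, w j * p (x j) c - p xq c| ≤ ∑ j, w j * min 1 ((L : ℝ) * ‖x j - xq‖) :=
    (abs_sum_mul_sub_le _ (fun j _ => hw j) hw1 _ _).trans <| Finset.sum_le_sum fun j _ =>
      mul_le_mul_of_nonneg_left (dist_eq_norm (x j) xq ▸
        hLip.abs_apply_sub_le_min_of_mem_stdSimplex hsimplex (x j) xq c) (hw j)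
  have hrange : ∀ j ∈ Finset.univ, ∀ᵐ ω ∂ℙ, w j * Y j ω ∈ Set.Icc 0 (w j) := fun j _ =>
    ae_of_all _ fun ω => by rcases h01 j ω with h | h <;> simp [h, hw j]
  have hhoeffding := measureReal_abs_sum_sub_sum_integral_ge_le
    (fun j => (hmeas j).const_mul (w j)) (hindep.comp (fun j y => w j * y)
      fun j => measurable_id.const_mul (w j)) hrange hε.le
  simp only [integral_const_mul, hmean, sub_zero] at hhoeffding
  calc ℙ {ω | |∑ j, w j * Y j ω - p xq c| > ε + ∑ j, w j * min 1 ((L : ℝ) * ‖x j - xq‖)}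
      ≤ ℙ {ω | ε ≤ |∑ j, w j * Y j ω - ∑ j, w j * p (x j) c|} := measure_mono fun ω hω => by
        have := abs_sub_abs_le_abs_sub (∑ j, w j * Y j ω - p xq c) (∑ j, w j * p (x j) c - p xq c)
        simp only [sub_sub_sub_cancel_right] at this
        simp only [Set.mem_ofPred_eq] at hω ⊢
        linarith
    _ ≤ _ := by
        rw [← ofReal_measureReal]
        exact ENNReal.ofReal_le_ofReal hhoeffding
end
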